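/- Define v(x,t) = −2√6·arctan( √3·sin(2x − 64t − π/2) / cosh(2√3·x) ) and u(x,t) = ∂_x v(x,t). Then u is a smooth function on ℝ² and u satisfies the mKdV equation ∂_t u + u²·∂_x u + ∂_x³ u = 0 everywhere (the breather solution). -/

import Mathlib

noncomputable def pdx (f : ℝ × ℝ → ℝ) : ℝ × ℝ → ℝ := fun p => deriv (fun y => f (y, p.2)) p.1

noncomputable def pdt (f : ℝ × ℝ → ℝ) : ℝ × ℝ → ℝ := fun p => deriv (fun s => f (p.1, s)) p.2

noncomputable def breatherV : ℝ × ℝ → ℝ := fun p =>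
  -2 * Real.sqrt 6
    * Real.arctan (Real.sqrt 3 * Real.sin (2 * p.1 - 64 * p.2 - Real.pi / 2)
        / Real.cosh (2 * Real.sqrt 3 * p.1))

noncomputable def breatherU : ℝ × ℝ → ℝ := pdx breatherV

noncomputable section
set_option maxHeartbeats 12000000
set_option maxRecDepth 16000

def SS (x t : ℝ) : ℝ := Real.sin (2 * x - 64 * t - Real.pi / 2)
def CC (x t : ℝ) : ℝ := Real.cos (2 * x - 64 * t - Real.pi / 2)
def SH (x : ℝ) : ℝ := Real.sinh (2 * Real.sqrt 3 * x)
def CH (x : ℝ) : ℝ := Real.cosh (2 * Real.sqrt 3 * x)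
def DD (x t : ℝ) : ℝ := CH x ^ 2 + 3 * SS x t ^ 2

lemma CH_pos (x : ℝ) : 0 < CH x := Real.cosh_pos _
lemma DD_pos (x t : ℝ) : 0 < DD x t := by
  have h := CH_pos x
  have := sq_nonneg (SS x t)
  unfold DD; nlinarith

lemma hlin (t x : ℝ) : HasDerivAt (fun y : ℝ => 2 * y - 64 * t - Real.pi / 2) 2 x := by
  simpa using (((hasDerivAt_id x).const_mul 2).sub_const (64 * t)).sub_const (Real.pi / 2)

lemma hSS (t x : ℝ) : HasDerivAt (fun y => SS y t) (2 * CC x t) x := by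
  unfold SS CC
  simpa [mul_comm] using (hlin t x).sin

lemma hCC (t x : ℝ) : HasDerivAt (fun y => CC y t) ((-2) * SS x t) x := by
  unfold SS CC
  have := (hlin t x).cos
  convert this using 1
  ring

lemma hlin2 (x : ℝ) : HasDerivAt (fun y : ℝ => 2 * Real.sqrt 3 * y) (2 * Real.sqrt 3) x := by
  simpa using (hasDerivAt_id x).const_mul (2 * Real.sqrt 3)

lemma hSH (x : ℝ) : HasDerivAt SH (2 * Real.sqrt 3 * CH x) x := by
  unfold SH CH
  have := (hlin2 x).sinh
  convert this using 1
  ring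

lemma hCH (x : ℝ) : HasDerivAt CH (2 * Real.sqrt 3 * SH x) x := by
  unfold SH CH
  have := (hlin2 x).cosh
  convert this using 1
  ring

lemma hlint (x t : ℝ) : HasDerivAt (fun s : ℝ => 2 * x - 64 * s - Real.pi / 2) (-64) t := by
  simpa using (((hasDerivAt_id t).const_mul 64).const_sub (2 * x)).sub_const (Real.pi / 2)

lemma hSSt (x t : ℝ) : HasDerivAt (fun s => SS x s) ((-64) * CC x t) t := by
  unfold SS CC
  have := (hlint x t).sin
  convert this using 1
  ring

lemma hCCt (x t : ℝ) : HasDerivAt (fun s => CC x s) (64 * SS x t) t := by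
  unfold SS CC
  have := (hlint x t).cos
  convert this using 1
  ring

lemma hDD (t x : ℝ) : HasDerivAt (fun y => DD y t)
    (2 * Real.sqrt 3 * SH x * (2 * CH x) + 12 * SS x t * CC x t) x := by
  unfold DD
  have hch := hCH x
  have hS := hSS t x
  convert (hch.pow 2).add (HasDerivAt.const_mul 3 (hS.pow 2)) using 1
  · rfl
  · rfl
  · rfl
  push_cast
  ring

lemma hDDt (x t : ℝ) : HasDerivAt (fun s => DD x s) ((-384) * SS x t * CC x t) t := by
  unfold DD
  have hS := hSSt x t
  convert (hasDerivAt_const t (CH x ^ 2)).add (HasDerivAt.const_mul 3 (hS.pow 2)) using 1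
  · rfl
  · rfl
  · rfl
  push_cast
  ring

def U0 (x t : ℝ) : ℝ := (12 * Real.sqrt 6 * (SS x t ^ 1 * CC x t ^ 0 * SH x ^ 1 * CH x ^ 0) + (-4) * Real.sqrt 6 * Real.sqrt 3 * (SS x t ^ 0 * CC x t ^ 1 * SH x ^ 0 * CH x ^ 1)) / DD x t ^ 1

def U1 (x t : ℝ) : ℝ := (48 * Real.sqrt 6 * (SS x t ^ 0 * CC x t ^ 1 * SH x ^ 1 * CH x ^ 2) + (-144) * Real.sqrt 6 * (SS x t ^ 2 * CC x t ^ 1 * SH x ^ 1 * CH x ^ 0) + 32 * Real.sqrt 6 * Real.sqrt 3 * (SS x t ^ 1 * CC x t ^ 0 * SH x ^ 0 * CH x ^ 3) + (-48) * Real.sqrt 6 * Real.sqrt 3 * (SS x t ^ 1 * CC x t ^ 0 * SH x ^ 2 * CH x ^ 1) + 48 * Real.sqrt 6 * Real.sqrt 3 * (SS x t ^ 1 * CC x t ^ 2 * SH x ^ 0 * CH x ^ 1) + 96 * Real.sqrt 6 * Real.sqrt 3 * (SS x t ^ 3 * CC x t ^ 0 * SH x ^ 0 * CH x ^ 1)) /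 DD x t ^ 2

def U2 (x t : ℝ) : ℝ := ((-864) * Real.sqrt 6 * (SS x t ^ 1 * CC x t ^ 0 * SH x ^ 1 * CH x ^ 4) + 864 * Real.sqrt 6 * (SS x t ^ 1 * CC x t ^ 0 * SH x ^ 3 * CH x ^ 2) + (-2592) * Real.sqrt 6 * (SS x t ^ 1 * CC x t ^ 2 * SH x ^ 1 * CH x ^ 2) + (-1728) * Real.sqrt 6 * (SS x t ^ 3 * CC x t ^ 0 * SH x ^ 1 * CH x ^ 2) + (-864) * Real.sqrt 6 * (SS x t ^ 3 * CC x t ^ 0 * SH x ^ 3 * CH x ^ 0) + 2592 * Real.sqrt 6 * (SS x t ^ 3 * CC x t ^ 2 * SH x ^ 1 * CH x ^ 0) + 2592 * Real.sqrt 6 * (SS x t ^ 5 * CC x t ^ 0 * SH x ^ 1 * CH x ^ 0) + 160 * Real.sqrt 6 * Real.sqrt 3 * (SS x t ^ 0 * CC x t ^ 1 * SH x ^ 0 * CH x ^ 5) + (-288) * Real.sqrt 6 * Real.sqrt 3 * (SS x t ^ 0 * CC x t ^ 1 * SH x ^ 2 * CH x ^ 3) + 96 * Real.sqrt 6 * Real.sqrt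 3 * (SS x t ^ 0 * CC x t ^ 3 * SH x ^ 0 * CH x ^ 3) + (-192) * Real.sqrt 6 * Real.sqrt 3 * (SS x t ^ 2 * CC x t ^ 1 * SH x ^ 0 * CH x ^ 3) + 2592 * Real.sqrt 6 * Real.sqrt 3 * (SS x t ^ 2 * CC x t ^ 1 * SH x ^ 2 * CH x ^ 1) + (-864) * Real.sqrt 6 * Real.sqrt 3 * (SS x t ^ 2 * CC x t ^ 3 * SH x ^ 0 * CH x ^ 1) + (-2016) * Real.sqrt 6 * Real.sqrt 3 * (SS x t ^ 4 * CC x t ^ 1 * SH x ^ 0 * CH x ^ 1)) / DD x t ^ 3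

def U3 (x t : ℝ) : ℝ := ((-6144) * Real.sqrt 6 * (SS x t ^ 0 * CC x t ^ 1 * SH x ^ 1 * CH x ^ 6) + 6912 * Real.sqrt 6 * (SS x t ^ 0 * CC x t ^ 1 * SH x ^ 3 * CH x ^ 4) + (-6912) * Real.sqrt 6 * (SS x t ^ 0 * CC x t ^ 3 * SH x ^ 1 * CH x ^ 4) + 64512 * Real.sqrt 6 * (SS x t ^ 2 * CC x t ^ 1 * SH x ^ 1 * CH x ^ 4) + (-124416) * Real.sqrt 6 * (SS x t ^ 2 * CC x t ^ 1 * SH x ^ 3 * CH x ^ 2) + 124416 * Real.sqrt 6 * (SS x t ^ 2 * CC x t ^ 3 * SH x ^ 1 * CH x ^ 2) + 221184 * Real.sqrt 6 * (SS x t ^ 4 * CC x t ^ 1 * SH x ^ 1 * CH x ^ 2) + 62208 * Real.sqrt 6 * (SS x t ^ 4 * CC x t ^ 1 * SH x ^ 3 * CH x ^ 0) + (-62208) * Real.sqrt 6 * (SS x t ^ 4 * CC x t ^ 3 * SH x ^ 1 * CH x ^ 0) + (-82944) * Real.sqrt 6 * (SS x t ^ 6 * CC x t ^ 1 * SH x ^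 1 * CH x ^ 0) + (-2048) * Real.sqrt 6 * Real.sqrt 3 * (SS x t ^ 1 * CC x t ^ 0 * SH x ^ 0 * CH x ^ 7) + 9216 * Real.sqrt 6 * Real.sqrt 3 * (SS x t ^ 1 * CC x t ^ 0 * SH x ^ 2 * CH x ^ 5) + (-6912) * Real.sqrt 6 * Real.sqrt 3 * (SS x t ^ 1 * CC x t ^ 0 * SH x ^ 4 * CH x ^ 3) + (-12288) * Real.sqrt 6 * Real.sqrt 3 * (SS x t ^ 1 * CC x t ^ 2 * SH x ^ 0 * CH x ^ 5) + 41472 * Real.sqrt 6 * Real.sqrt 3 * (SS x t ^ 1 * CC x t ^ 2 * SH x ^ 2 * CH x ^ 3) + (-6912) * Real.sqrt 6 * Real.sqrt 3 * (SS x t ^ 1 * CC x t ^ 4 * SH x ^ 0 * CH x ^ 3) + (-9216) * Real.sqrt 6 * Real.sqrt 3 * (SS x t ^ 3 * CC x t ^ 0 * SH x ^ 0 * CH x ^ 5) + 20736 * Real.sqrt 6 * Real.sqrt 3 * (SS x t ^ 3 * CC x t ^ 0 * SH x ^ 4 * CH x ^ 1) + (-18432) * Real.sqrt 6 * Real.sqrt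 3 * (SS x t ^ 3 * CC x t ^ 2 * SH x ^ 0 * CH x ^ 3) + (-124416) * Real.sqrt 6 * Real.sqrt 3 * (SS x t ^ 3 * CC x t ^ 2 * SH x ^ 2 * CH x ^ 1) + 20736 * Real.sqrt 6 * Real.sqrt 3 * (SS x t ^ 3 * CC x t ^ 4 * SH x ^ 0 * CH x ^ 1) + (-82944) * Real.sqrt 6 * Real.sqrt 3 * (SS x t ^ 5 * CC x t ^ 0 * SH x ^ 2 * CH x ^ 1) + 55296 * Real.sqrt 6 * Real.sqrt 3 * (SS x t ^ 5 * CC x t ^ 2 * SH x ^ 0 * CH x ^ 1) + 27648 * Real.sqrt 6 * Real.sqrt 3 * (SS x t ^ 7 * CC x t ^ 0 * SH x ^ 0 * CH x ^ 1)) / DD x t ^ 4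

def UT (x t : ℝ) : ℝ := ((-768) * Real.sqrt 6 * (SS x t ^ 0 * CC x t ^ 1 * SH x ^ 1 * CH x ^ 2) + 2304 * Real.sqrt 6 * (SS x t ^ 2 * CC x t ^ 1 * SH x ^ 1 * CH x ^ 0) + (-256) * Real.sqrt 6 * Real.sqrt 3 * (SS x t ^ 1 * CC x t ^ 0 * SH x ^ 0 * CH x ^ 3) + (-1536) * Real.sqrt 6 * Real.sqrt 3 * (SS x t ^ 1 * CC x t ^ 2 * SH x ^ 0 * CH x ^ 1) + (-768) * Real.sqrt 6 * Real.sqrt 3 * (SS x t ^ 3 * CC x t ^ 0 * SH x ^ 0 * CH x ^ 1)) / DD x t ^ 2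

lemma hV (x t : ℝ) : HasDerivAt (fun y => breatherV (y, t)) (U0 x t) x := by
  have hS := hSS t x
  have hch := hCH x
  have hcne : CH x ≠ 0 := (CH_pos x).ne'
  have hq : HasDerivAt (fun y => Real.sqrt 3 * SS y t / CH y)
      (((Real.sqrt 3 * (2 * CC x t)) * CH x - Real.sqrt 3 * SS x t * (2 * Real.sqrt 3 * SH x)) / CH x ^ 2) x :=
    (HasDerivAt.const_mul (Real.sqrt 3) hS).div hch hcne
  have harc := (Real.hasDerivAt_arctan (Real.sqrt 3 * SS x t / CH x)).comp x hq
  have h := HasDerivAt.const_mul (-2 * Real.sqrt 6) harc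
  show HasDerivAt (fun y => -2 * Real.sqrt 6 * Real.arctan (Real.sqrt 3 * SS y t / CH y)) (U0 x t) x
  convert h using 1
  · rfl
  · rfl
  · rfl
  have h3 : Real.sqrt 3 ^ 2 = 3 := Real.sq_sqrt (by norm_num)
  have hDne : DD x t ≠ 0 := (DD_pos x t).ne'
  have e1 : 1 + (Real.sqrt 3 * SS x t / CH x) ^ 2 = DD x t / CH x ^ 2 := by
    unfold DD
    rw [div_pow, mul_pow, h3]
    field_simp
  rw [e1, one_div_div]
  have e2 : Real.sqrt 3 * SS x t * (2 * Real.sqrt 3 * SH x) = 6 * (SS x t * SH x) := by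
    linear_combination (2 * SS x t * SH x) * h3
  rw [e2]
  unfold U0
  field_simp
  ring

lemma hU0x (x t : ℝ) : HasDerivAt (fun y => U0 y t) (U1 x t) x := by
  have hS := hSS t x
  have hC := hCC t x
  have hsh := hSH x
  have hch := hCH x
  have hD := hDD t x
  have hDne : DD x t ≠ 0 := (DD_pos x t).ne'
  have h6 : Real.sqrt 6 ^ 2 = 6 := Real.sq_sqrt (by norm_num)
  have h3 : Real.sqrt 3 ^ 2 = 3 := Real.sq_sqrt (by norm_num)
  have hD0 : DD x t = CH x ^ 2 + 3 * SS x t ^ 2 := rfl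
  have hnum : HasDerivAt (fun y => 12 * Real.sqrt 6 * (SS y t ^ 1 * CC y t ^ 0 * SH y ^ 1 * CH y ^ 0) + (-4) * Real.sqrt 6 * Real.sqrt 3 * (SS y t ^ 0 * CC y t ^ 1 * SH y ^ 0 * CH y ^ 1)) _ x :=
    ((HasDerivAt.const_mul (12 * Real.sqrt 6) ((((hS.pow 1).mul (hC.pow 0)).mul (hsh.pow 1)).mul (hch.pow 0))).add (HasDerivAt.const_mul ((-4) * Real.sqrt 6 * Real.sqrt 3) ((((hS.pow 0).mul (hC.pow 1)).mul (hsh.pow 0)).mul (hch.pow 1))))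
  have h := hnum.div (hD.pow 1) (pow_ne_zero _ hDne)
  unfold U0 U1
  convert h using 1
  · rfl
  · rfl
  · rfl
  simp only [Pi.pow_apply, Pi.mul_apply]
  rw [div_eq_div_iff (pow_ne_zero _ hDne) (pow_ne_zero _ (pow_ne_zero _ hDne))]
  push_cast
  linear_combination (8 * (Real.sqrt 6) ^ 1 * (CC x t) ^ 1 * (SH x) ^ 1 * (DD x t) ^ 3 + (-16) * (Real.sqrt 6) ^ 1 * (CC x t) ^ 1 * (SH x) ^ 1 * (CH x) ^ 2 * (DD x t) ^ 2) * h3 + ((-32) * (Real.sqrt 6) ^ 1 * (Real.sqrt 3) ^ 1 * (SS x t) ^ 1 * (CH x) ^ 1 * (DD x t) ^ 2) * hD0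

lemma hU1x (x t : ℝ) : HasDerivAt (fun y => U1 y t) (U2 x t) x := by
  have hS := hSS t x
  have hC := hCC t x
  have hsh := hSH x
  have hch := hCH x
  have hD := hDD t x
  have hDne : DD x t ≠ 0 := (DD_pos x t).ne'
  have h6 : Real.sqrt 6 ^ 2 = 6 := Real.sq_sqrt (by norm_num)
  have h3 : Real.sqrt 3 ^ 2 = 3 := Real.sq_sqrt (by norm_num)
  have hD0 : DD x t = CH x ^ 2 + 3 * SS x t ^ 2 := rfl
  have hnum : HasDerivAt (fun y => 48 * Real.sqrt 6 * (SS y t ^ 0 * CC y t ^ 1 * SH y ^ 1 * CH y ^ 2) + (-144) * Real.sqrt 6 * (SS y t ^ 2 * CC y t ^ 1 * SH y ^ 1 * CH y ^ 0) + 32 * Real.sqrt 6 * Real.sqrt 3 * (SS y t ^ 1 * CC y t ^ 0 * SH y ^ 0 * CH y ^ 3) + (-48) * Real.sqrt 6 * Real.sqrt 3 * (SS y t ^ 1 * CC y t ^ 0 * SH y ^ 2 * CH y ^ 1) + 48 * Real.sqrt 6 * Real.sqrt 3 * (SS y t ^ 1 * CC y t ^ 2 * SH y ^ 0 * CH y ^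 1) + 96 * Real.sqrt 6 * Real.sqrt 3 * (SS y t ^ 3 * CC y t ^ 0 * SH y ^ 0 * CH y ^ 1)) _ x :=
    ((((((HasDerivAt.const_mul (48 * Real.sqrt 6) ((((hS.pow 0).mul (hC.pow 1)).mul (hsh.pow 1)).mul (hch.pow 2))).add (HasDerivAt.const_mul ((-144) * Real.sqrt 6) ((((hS.pow 2).mul (hC.pow 1)).mul (hsh.pow 1)).mul (hch.pow 0)))).add (HasDerivAt.const_mul (32 * Real.sqrt 6 * Real.sqrt 3) ((((hS.pow 1).mul (hC.pow 0)).mul (hsh.pow 0)).mul (hch.pow 3)))).add (HasDerivAt.const_mul ((-48) * Real.sqrt 6 * Real.sqrt 3) ((((hS.pow 1).mul (hC.pow 0)).mul (hsh.pow 2)).mul (hch.pow 1)))).add (HasDerivAt.const_mul (48 * Real.sqrt 6 * Real.sqrt 3) ((((hS.pow 1).mul (hC.pow 2)).mul (hsh.pow 0)).mul (hch.pow 1)))).add (HasDerivAt.const_mul (96 * Real.sqrt 6 * Real.sqrt 3) ((((hS.pow 3).mul (hC.pow 0)).mul (hsh.pow 0)).mul (hch.pow 1))))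
  have h := hnum.div (hD.pow 2) (pow_ne_zero _ hDne)
  unfold U1 U2
  convert h using 1
  · rfl
  · rfl
  · rfl
  simp only [Pi.pow_apply, Pi.mul_apply]
  rw [div_eq_div_iff (pow_ne_zero _ hDne) (pow_ne_zero _ (pow_ne_zero _ hDne))]
  push_cast
  linear_combination (256 * (Real.sqrt 6) ^ 1 * (SS x t) ^ 1 * (SH x) ^ 1 * (CH x) ^ 4 * (DD x t) ^ 4 + 96 * (Real.sqrt 6) ^ 1 * (SS x t) ^ 1 * (SH x) ^ 3 * (DD x t) ^ 5 + (-384) * (Real.sqrt 6) ^ 1 * (SS x t) ^ 1 * (SH x) ^ 3 * (CH x) ^ 2 * (DD x t) ^ 4 + (-96) * (Real.sqrt 6) ^ 1 * (SS x t) ^ 1 * (CC x t) ^ 2 * (SH x) ^ 1 * (DD x t) ^ 5 + 384 * (Real.sqrt 6) ^ 1 * (SS x t) ^ 1 * (CC x t) ^ 2 * (SH x) ^ 1 * (CH x) ^ 2 * (DD x t) ^ 4 + (-192) * (Real.sqrt 6) ^ 1 * (SS x t) ^ 3 * (SH x) ^ 1 * (DD x t) ^ 5 + 768 * (Real.sqrt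 6) ^ 1 * (SS x t) ^ 3 * (SH x) ^ 1 * (CH x) ^ 2 * (DD x t) ^ 4) * h3 + (96 * (Real.sqrt 6) ^ 1 * (SS x t) ^ 1 * (SH x) ^ 1 * (CH x) ^ 2 * (DD x t) ^ 4 + 288 * (Real.sqrt 6) ^ 1 * (SS x t) ^ 1 * (SH x) ^ 3 * (DD x t) ^ 4 + 288 * (Real.sqrt 6) ^ 1 * (SS x t) ^ 1 * (CC x t) ^ 2 * (SH x) ^ 1 * (DD x t) ^ 4 + (-864) * (Real.sqrt 6) ^ 1 * (SS x t) ^ 3 * (SH x) ^ 1 * (DD x t) ^ 4 + (-160) * (Real.sqrt 6) ^ 1 * (Real.sqrt 3) ^ 1 * (CC x t) ^ 1 * (CH x) ^ 3 * (DD x t) ^ 4 + (-96) * (Real.sqrt 6) ^ 1 * (Real.sqrt 3) ^ 1 * (CC x t) ^ 1 * (SH x) ^ 2 * (CH x) ^ 1 * (DD x t) ^ 4 + (-96) * (Real.sqrt 6) ^ 1 * (Real.sqrt 3) ^ 1 * (CC x t) ^ 3 * (CH x) ^ 1 * (DD x t) ^ 4 + (-96) * (Real.sqrt 6) ^ 1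 * (Real.sqrt 3) ^ 1 * (SS x t) ^ 2 * (CC x t) ^ 1 * (CH x) ^ 1 * (DD x t) ^ 4) * hD0

lemma hU2x (x t : ℝ) : HasDerivAt (fun y => U2 y t) (U3 x t) x := by
  have hS := hSS t x
  have hC := hCC t x
  have hsh := hSH x
  have hch := hCH x
  have hD := hDD t x
  have hDne : DD x t ≠ 0 := (DD_pos x t).ne'
  have h6 : Real.sqrt 6 ^ 2 = 6 := Real.sq_sqrt (by norm_num)
  have h3 : Real.sqrt 3 ^ 2 = 3 := Real.sq_sqrt (by norm_num)
  have hD0 : DD x t = CH x ^ 2 + 3 * SS x t ^ 2 := rfl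
  have hnum : HasDerivAt (fun y => (-864) * Real.sqrt 6 * (SS y t ^ 1 * CC y t ^ 0 * SH y ^ 1 * CH y ^ 4) + 864 * Real.sqrt 6 * (SS y t ^ 1 * CC y t ^ 0 * SH y ^ 3 * CH y ^ 2) + (-2592) * Real.sqrt 6 * (SS y t ^ 1 * CC y t ^ 2 * SH y ^ 1 * CH y ^ 2) + (-1728) * Real.sqrt 6 * (SS y t ^ 3 * CC y t ^ 0 * SH y ^ 1 * CH y ^ 2) + (-864) * Real.sqrt 6 * (SS y t ^ 3 * CC y t ^ 0 * SH y ^ 3 * CH y ^ 0) + 2592 * Real.sqrt 6 * (SS y t ^ 3 * CC y t ^ 2 * SH y ^ 1 * CH y ^ 0) + 2592 * Real.sqrt 6 * (SS y t ^ 5 * CC y t ^ 0 * SH y ^ 1 * CH y ^ 0) + 160 * Real.sqrt 6 * Real.sqrt 3 * (SS y t ^ 0 * CC y t ^ 1 * SH y ^ 0 * CH y ^ 5) + (-288) * Real.sqrt 6 * Real.sqrt 3 * (SS y t ^ 0 * CC y t ^ 1 * SH y ^ 2 * CH y ^ 3) + 96 * Real.sqrt 6 * Real.sqrt 3 * (SS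 y t ^ 0 * CC y t ^ 3 * SH y ^ 0 * CH y ^ 3) + (-192) * Real.sqrt 6 * Real.sqrt 3 * (SS y t ^ 2 * CC y t ^ 1 * SH y ^ 0 * CH y ^ 3) + 2592 * Real.sqrt 6 * Real.sqrt 3 * (SS y t ^ 2 * CC y t ^ 1 * SH y ^ 2 * CH y ^ 1) + (-864) * Real.sqrt 6 * Real.sqrt 3 * (SS y t ^ 2 * CC y t ^ 3 * SH y ^ 0 * CH y ^ 1) + (-2016) * Real.sqrt 6 * Real.sqrt 3 * (SS y t ^ 4 * CC y t ^ 1 * SH y ^ 0 * CH y ^ 1)) _ x :=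
    ((((((((((((((HasDerivAt.const_mul ((-864) * Real.sqrt 6) ((((hS.pow 1).mul (hC.pow 0)).mul (hsh.pow 1)).mul (hch.pow 4))).add (HasDerivAt.const_mul (864 * Real.sqrt 6) ((((hS.pow 1).mul (hC.pow 0)).mul (hsh.pow 3)).mul (hch.pow 2)))).add (HasDerivAt.const_mul ((-2592) * Real.sqrt 6) ((((hS.pow 1).mul (hC.pow 2)).mul (hsh.pow 1)).mul (hch.pow 2)))).add (HasDerivAt.const_mul ((-1728) * Real.sqrt 6) ((((hS.pow 3).mul (hC.pow 0)).mul (hsh.pow 1)).mul (hch.pow 2)))).add (HasDerivAt.const_mul ((-864) * Real.sqrt 6) ((((hS.pow 3).mul (hC.pow 0)).mul (hsh.pow 3)).mul (hch.pow 0)))).add (HasDerivAt.const_mul (2592 * Real.sqrt 6) ((((hS.pow 3).mul (hC.pow 2)).mul (hsh.pow 1)).mul (hch.pow 0)))).add (HasDerivAt.const_mul (2592 * Real.sqrt 6) ((((hS.pow 5).mul (hC.pow 0)).mul (hsh.pow 1)).mul (hch.pow 0)))).add (HasDerivAt.const_mul (160 * Real.sqrt 6 * Real.sqrt 3) ((((hS.pow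 0).mul (hC.pow 1)).mul (hsh.pow 0)).mul (hch.pow 5)))).add (HasDerivAt.const_mul ((-288) * Real.sqrt 6 * Real.sqrt 3) ((((hS.pow 0).mul (hC.pow 1)).mul (hsh.pow 2)).mul (hch.pow 3)))).add (HasDerivAt.const_mul (96 * Real.sqrt 6 * Real.sqrt 3) ((((hS.pow 0).mul (hC.pow 3)).mul (hsh.pow 0)).mul (hch.pow 3)))).add (HasDerivAt.const_mul ((-192) * Real.sqrt 6 * Real.sqrt 3) ((((hS.pow 2).mul (hC.pow 1)).mul (hsh.pow 0)).mul (hch.pow 3)))).add (HasDerivAt.const_mul (2592 * Real.sqrt 6 * Real.sqrt 3) ((((hS.pow 2).mul (hC.pow 1)).mul (hsh.pow 2)).mul (hch.pow 1)))).add (HasDerivAt.const_mul ((-864) * Real.sqrt 6 * Real.sqrt 3) ((((hS.pow 2).mul (hC.pow 3)).mul (hsh.pow 0)).mul (hch.pow 1)))).add (HasDerivAt.const_mul ((-2016) * Real.sqrt 6 * Real.sqrt 3) ((((hS.pow 4).mul (hC.pow 1)).mul (hsh.pow 0)).mul (hch.pow 1))))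
  have h := hnum.div (hD.pow 3) (pow_ne_zero _ hDne)
  unfold U2 U3
  convert h using 1
  · rfl
  · rfl
  · rfl
  simp only [Pi.pow_apply, Pi.mul_apply]
  rw [div_eq_div_iff (pow_ne_zero _ hDne) (pow_ne_zero _ (pow_ne_zero _ hDne))]
  push_cast
  linear_combination ((-448) * (Real.sqrt 6) ^ 1 * (CC x t) ^ 1 * (SH x) ^ 1 * (CH x) ^ 4 * (DD x t) ^ 7 + 1920 * (Real.sqrt 6) ^ 1 * (CC x t) ^ 1 * (SH x) ^ 1 * (CH x) ^ 6 * (DD x t) ^ 6 + 1728 * (Real.sqrt 6) ^ 1 * (CC x t) ^ 1 * (SH x) ^ 3 * (CH x) ^ 2 * (DD x t) ^ 7 + (-3456) * (Real.sqrt 6) ^ 1 * (CC x t) ^ 1 * (SH x) ^ 3 * (CH x) ^ 4 * (DD x t) ^ 6 + (-576) * (Real.sqrt 6) ^ 1 * (CC x t) ^ 3 * (SH x) ^ 1 * (CH x) ^ 2 * (DD x t) ^ 7 + 1152 * (Real.sqrt 6) ^ 1 * (CC x t) ^ 3 * (SH x) ^ 1 * (CH x) ^ 4 * (DD x t) ^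 6 + (-9216) * (Real.sqrt 6) ^ 1 * (SS x t) ^ 2 * (CC x t) ^ 1 * (SH x) ^ 1 * (CH x) ^ 2 * (DD x t) ^ 7 + (-2304) * (Real.sqrt 6) ^ 1 * (SS x t) ^ 2 * (CC x t) ^ 1 * (SH x) ^ 1 * (CH x) ^ 4 * (DD x t) ^ 6 + (-5184) * (Real.sqrt 6) ^ 1 * (SS x t) ^ 2 * (CC x t) ^ 1 * (SH x) ^ 3 * (DD x t) ^ 7 + 31104 * (Real.sqrt 6) ^ 1 * (SS x t) ^ 2 * (CC x t) ^ 1 * (SH x) ^ 3 * (CH x) ^ 2 * (DD x t) ^ 6 + 1728 * (Real.sqrt 6) ^ 1 * (SS x t) ^ 2 * (CC x t) ^ 3 * (SH x) ^ 1 * (DD x t) ^ 7 + (-10368) * (Real.sqrt 6) ^ 1 * (SS x t) ^ 2 * (CC x t) ^ 3 * (SH x) ^ 1 * (CH x) ^ 2 * (DD x t) ^ 6 + 4032 * (Real.sqrt 6) ^ 1 * (SS x t) ^ 4 * (CC x t) ^ 1 * (SH x) ^ 1 * (DD x t) ^ 7 + (-24192) * (Real.sqrt 6) ^ 1 * (SS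 x t) ^ 4 * (CC x t) ^ 1 * (SH x) ^ 1 * (CH x) ^ 2 * (DD x t) ^ 6) * h3 + (384 * (Real.sqrt 6) ^ 1 * (CC x t) ^ 1 * (SH x) ^ 1 * (CH x) ^ 4 * (DD x t) ^ 6 + 3456 * (Real.sqrt 6) ^ 1 * (CC x t) ^ 1 * (SH x) ^ 3 * (CH x) ^ 2 * (DD x t) ^ 6 + 3456 * (Real.sqrt 6) ^ 1 * (CC x t) ^ 3 * (SH x) ^ 1 * (CH x) ^ 2 * (DD x t) ^ 6 + (-27648) * (Real.sqrt 6) ^ 1 * (SS x t) ^ 2 * (CC x t) ^ 1 * (SH x) ^ 1 * (CH x) ^ 2 * (DD x t) ^ 6 + (-10368) * (Real.sqrt 6) ^ 1 * (SS x t) ^ 2 * (CC x t) ^ 1 * (SH x) ^ 3 * (DD x t) ^ 6 + (-10368) * (Real.sqrt 6) ^ 1 * (SS x t) ^ 2 * (CC x t) ^ 3 * (SH x) ^ 1 * (DD x t) ^ 6 + (-3456) * (Real.sqrt 6) ^ 1 * (SS x t) ^ 4 * (CC x t) ^ 1 * (SH x) ^ 1 * (DD x t) ^ 6 + 2048 *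 (Real.sqrt 6) ^ 1 * (Real.sqrt 3) ^ 1 * (SS x t) ^ 1 * (CH x) ^ 5 * (DD x t) ^ 6 + 1152 * (Real.sqrt 6) ^ 1 * (Real.sqrt 3) ^ 1 * (SS x t) ^ 1 * (SH x) ^ 2 * (CH x) ^ 3 * (DD x t) ^ 6 + (-3456) * (Real.sqrt 6) ^ 1 * (Real.sqrt 3) ^ 1 * (SS x t) ^ 1 * (SH x) ^ 4 * (CH x) ^ 1 * (DD x t) ^ 6 + 6528 * (Real.sqrt 6) ^ 1 * (Real.sqrt 3) ^ 1 * (SS x t) ^ 1 * (CC x t) ^ 2 * (CH x) ^ 3 * (DD x t) ^ 6 + 3456 * (Real.sqrt 6) ^ 1 * (Real.sqrt 3) ^ 1 * (SS x t) ^ 1 * (CC x t) ^ 4 * (CH x) ^ 1 * (DD x t) ^ 6 + 3072 * (Real.sqrt 6) ^ 1 * (Real.sqrt 3) ^ 1 * (SS x t) ^ 3 * (CH x) ^ 3 * (DD x t) ^ 6 + 17280 * (Real.sqrt 6) ^ 1 * (Real.sqrt 3) ^ 1 * (SS x t) ^ 3 * (SH x) ^ 2 * (CH x) ^ 1 * (DD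 x t) ^ 6 + 5760 * (Real.sqrt 6) ^ 1 * (Real.sqrt 3) ^ 1 * (SS x t) ^ 3 * (CC x t) ^ 2 * (CH x) ^ 1 * (DD x t) ^ 6 + (-9216) * (Real.sqrt 6) ^ 1 * (Real.sqrt 3) ^ 1 * (SS x t) ^ 5 * (CH x) ^ 1 * (DD x t) ^ 6) * hD0

lemma hU0t (x t : ℝ) : HasDerivAt (fun s => U0 x s) (UT x t) t := by
  have hSt := hSSt x t
  have hCt := hCCt x t
  have hDt := hDDt x t
  have hDne : DD x t ≠ 0 := (DD_pos x t).ne'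
  have h6 : Real.sqrt 6 ^ 2 = 6 := Real.sq_sqrt (by norm_num)
  have h3 : Real.sqrt 3 ^ 2 = 3 := Real.sq_sqrt (by norm_num)
  have hD0 : DD x t = CH x ^ 2 + 3 * SS x t ^ 2 := rfl
  have hnum : HasDerivAt (fun s => 12 * Real.sqrt 6 * (SS x s ^ 1 * CC x s ^ 0 * SH x ^ 1 * CH x ^ 0) + (-4) * Real.sqrt 6 * Real.sqrt 3 * (SS x s ^ 0 * CC x s ^ 1 * SH x ^ 0 * CH x ^ 1)) _ t :=
    ((HasDerivAt.const_mul (12 * Real.sqrt 6) ((((hSt.pow 1).mul (hCt.pow 0)).mul_const (SH x ^ 1)).mul_const (CH x ^ 0))).add (HasDerivAt.const_mul ((-4) * Real.sqrt 6 * Real.sqrt 3) ((((hSt.pow 0).mul (hCt.pow 1)).mul_const (SH x ^ 0)).mul_const (CH x ^ 1))))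
  have h := hnum.div (hDt.pow 1) (pow_ne_zero _ hDne)
  unfold U0 UT
  convert h using 1
  · rfl
  · rfl
  · rfl
  simp only [Pi.pow_apply, Pi.mul_apply]
  rw [div_eq_div_iff (pow_ne_zero _ hDne) (pow_ne_zero _ (pow_ne_zero _ hDne))]
  push_cast
  linear_combination (768 * (Real.sqrt 6) ^ 1 * (CC x t) ^ 1 * (SH x) ^ 1 * (DD x t) ^ 2 + 256 * (Real.sqrt 6) ^ 1 * (Real.sqrt 3) ^ 1 * (SS x t) ^ 1 * (CH x) ^ 1 * (DD x t) ^ 2) * hD0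

lemma pde_identity (x t : ℝ) : UT x t + U0 x t ^ 2 * U1 x t + U3 x t = 0 := by
  have hDne : DD x t ≠ 0 := (DD_pos x t).ne'
  have h6 : Real.sqrt 6 ^ 2 = 6 := Real.sq_sqrt (by norm_num)
  have h3 : Real.sqrt 3 ^ 2 = 3 := Real.sq_sqrt (by norm_num)
  have hD0 : DD x t = CH x ^ 2 + 3 * SS x t ^ 2 := rfl
  have hSC : SS x t ^ 2 + CC x t ^ 2 = 1 := by
    unfold SS CC; exact Real.sin_sq_add_cos_sq _
  have hhyp : CH x ^ 2 = SH x ^ 2 + 1 := by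
    unfold SH CH; exact Real.cosh_sq _
  have h0 : ((-768) * Real.sqrt 6 * (SS x t ^ 0 * CC x t ^ 1 * SH x ^ 1 * CH x ^ 2) + 2304 * Real.sqrt 6 * (SS x t ^ 2 * CC x t ^ 1 * SH x ^ 1 * CH x ^ 0) + (-256) * Real.sqrt 6 * Real.sqrt 3 * (SS x t ^ 1 * CC x t ^ 0 * SH x ^ 0 * CH x ^ 3) + (-1536) * Real.sqrt 6 * Real.sqrt 3 * (SS x t ^ 1 * CC x t ^ 2 * SH x ^ 0 * CH x ^ 1) + (-768) * Real.sqrt 6 * Real.sqrt 3 * (SS x t ^ 3 * CC x t ^ 0 * SH x ^ 0 * CH x ^ 1)) * DD x t ^ 2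
      + (12 * Real.sqrt 6 * (SS x t ^ 1 * CC x t ^ 0 * SH x ^ 1 * CH x ^ 0) + (-4) * Real.sqrt 6 * Real.sqrt 3 * (SS x t ^ 0 * CC x t ^ 1 * SH x ^ 0 * CH x ^ 1)) ^ 2 * (48 * Real.sqrt 6 * (SS x t ^ 0 * CC x t ^ 1 * SH x ^ 1 * CH x ^ 2) + (-144) * Real.sqrt 6 * (SS x t ^ 2 * CC x t ^ 1 * SH x ^ 1 * CH x ^ 0) + 32 * Real.sqrt 6 * Real.sqrt 3 * (SS x t ^ 1 * CC x t ^ 0 * SH x ^ 0 * CH x ^ 3) + (-48) * Real.sqrt 6 * Real.sqrt 3 * (SS x t ^ 1 * CC x t ^ 0 * SH x ^ 2 * CH x ^ 1) + 48 * Real.sqrt 6 * Real.sqrt 3 * (SS x t ^ 1 * CC x t ^ 2 * SH x ^ 0 * CH x ^ 1) + 96 * Real.sqrt 6 * Real.sqrt 3 * (SS x t ^ 3 * CC x t ^ 0 * SH x ^ 0 * CH x ^ 1))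
      + ((-6144) * Real.sqrt 6 * (SS x t ^ 0 * CC x t ^ 1 * SH x ^ 1 * CH x ^ 6) + 6912 * Real.sqrt 6 * (SS x t ^ 0 * CC x t ^ 1 * SH x ^ 3 * CH x ^ 4) + (-6912) * Real.sqrt 6 * (SS x t ^ 0 * CC x t ^ 3 * SH x ^ 1 * CH x ^ 4) + 64512 * Real.sqrt 6 * (SS x t ^ 2 * CC x t ^ 1 * SH x ^ 1 * CH x ^ 4) + (-124416) * Real.sqrt 6 * (SS x t ^ 2 * CC x t ^ 1 * SH x ^ 3 * CH x ^ 2) + 124416 * Real.sqrt 6 * (SS x t ^ 2 * CC x t ^ 3 * SH x ^ 1 * CH x ^ 2) + 221184 * Real.sqrt 6 * (SS x t ^ 4 * CC x t ^ 1 * SH x ^ 1 * CH x ^ 2) + 62208 * Real.sqrt 6 * (SS x t ^ 4 * CC x t ^ 1 * SH x ^ 3 * CH x ^ 0) + (-62208) * Real.sqrt 6 * (SS x t ^ 4 * CC x t ^ 3 * SH x ^ 1 * CH x ^ 0) + (-82944) * Real.sqrt 6 * (SS x t ^ 6 * CC x t ^ 1 * SH x ^ 1 * CH x ^ 0) + (-2048)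 * Real.sqrt 6 * Real.sqrt 3 * (SS x t ^ 1 * CC x t ^ 0 * SH x ^ 0 * CH x ^ 7) + 9216 * Real.sqrt 6 * Real.sqrt 3 * (SS x t ^ 1 * CC x t ^ 0 * SH x ^ 2 * CH x ^ 5) + (-6912) * Real.sqrt 6 * Real.sqrt 3 * (SS x t ^ 1 * CC x t ^ 0 * SH x ^ 4 * CH x ^ 3) + (-12288) * Real.sqrt 6 * Real.sqrt 3 * (SS x t ^ 1 * CC x t ^ 2 * SH x ^ 0 * CH x ^ 5) + 41472 * Real.sqrt 6 * Real.sqrt 3 * (SS x t ^ 1 * CC x t ^ 2 * SH x ^ 2 * CH x ^ 3) + (-6912) * Real.sqrt 6 * Real.sqrt 3 * (SS x t ^ 1 * CC x t ^ 4 * SH x ^ 0 * CH x ^ 3) + (-9216) * Real.sqrt 6 * Real.sqrt 3 * (SS x t ^ 3 * CC x t ^ 0 * SH x ^ 0 * CH x ^ 5) + 20736 * Real.sqrt 6 * Real.sqrt 3 * (SS x t ^ 3 * CC x t ^ 0 * SH x ^ 4 * CH x ^ 1) + (-18432) * Real.sqrt 6 * Real.sqrt 3 * (SS x t ^ 3 *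 CC x t ^ 2 * SH x ^ 0 * CH x ^ 3) + (-124416) * Real.sqrt 6 * Real.sqrt 3 * (SS x t ^ 3 * CC x t ^ 2 * SH x ^ 2 * CH x ^ 1) + 20736 * Real.sqrt 6 * Real.sqrt 3 * (SS x t ^ 3 * CC x t ^ 4 * SH x ^ 0 * CH x ^ 1) + (-82944) * Real.sqrt 6 * Real.sqrt 3 * (SS x t ^ 5 * CC x t ^ 0 * SH x ^ 2 * CH x ^ 1) + 55296 * Real.sqrt 6 * Real.sqrt 3 * (SS x t ^ 5 * CC x t ^ 2 * SH x ^ 0 * CH x ^ 1) + 27648 * Real.sqrt 6 * Real.sqrt 3 * (SS x t ^ 7 * CC x t ^ 0 * SH x ^ 0 * CH x ^ 1)) = 0 := by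
    linear_combination (6912 * (Real.sqrt 6) ^ 1 * (SS x t) ^ 2 * (CC x t) ^ 1 * (SH x) ^ 3 * (CH x) ^ 2 + (-20736) * (Real.sqrt 6) ^ 1 * (SS x t) ^ 4 * (CC x t) ^ 1 * (SH x) ^ 3 + (-4608) * (Real.sqrt 6) ^ 1 * (Real.sqrt 3) ^ 1 * (SS x t) ^ 1 * (CC x t) ^ 2 * (SH x) ^ 2 * (CH x) ^ 3 + 4608 * (Real.sqrt 6) ^ 1 * (Real.sqrt 3) ^ 1 * (SS x t) ^ 3 * (SH x) ^ 2 * (CH x) ^ 3 + (-6912) * (Real.sqrt 6) ^ 1 * (Real.sqrt 3) ^ 1 * (SS x t) ^ 3 * (SH x) ^ 4 * (CH x) ^ 1 + 20736 * (Real.sqrt 6) ^ 1 * (Real.sqrt 3) ^ 1 * (SS x t) ^ 3 * (CC x t) ^ 2 * (SH x) ^ 2 * (CH x) ^ 1 + 13824 * (Real.sqrt 6) ^ 1 * (Real.sqrt 3) ^ 1 * (SS x t) ^ 5 * (SH x) ^ 2 * (CH x) ^ 1 + 768 * (Real.sqrt 6) ^ 1 * (Real.sqrt 3) ^ 2 *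 (CC x t) ^ 3 * (SH x) ^ 1 * (CH x) ^ 4 + (-3072) * (Real.sqrt 6) ^ 1 * (Real.sqrt 3) ^ 2 * (SS x t) ^ 2 * (CC x t) ^ 1 * (SH x) ^ 1 * (CH x) ^ 4 + 4608 * (Real.sqrt 6) ^ 1 * (Real.sqrt 3) ^ 2 * (SS x t) ^ 2 * (CC x t) ^ 1 * (SH x) ^ 3 * (CH x) ^ 2 + (-6912) * (Real.sqrt 6) ^ 1 * (Real.sqrt 3) ^ 2 * (SS x t) ^ 2 * (CC x t) ^ 3 * (SH x) ^ 1 * (CH x) ^ 2 + (-9216) * (Real.sqrt 6) ^ 1 * (Real.sqrt 3) ^ 2 * (SS x t) ^ 4 * (CC x t) ^ 1 * (SH x) ^ 1 * (CH x) ^ 2 + 512 * (Real.sqrt 6) ^ 1 * (Real.sqrt 3) ^ 3 * (SS x t) ^ 1 * (CC x t) ^ 2 * (CH x) ^ 5 + (-768) * (Real.sqrt 6) ^ 1 * (Real.sqrt 3) ^ 3 * (SS x t) ^ 1 * (CC x t) ^ 2 * (SH x) ^ 2 * (CH x) ^ 3 + 768 * (Real.sqrt 6) ^ 1 * (Real.sqrt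 3) ^ 3 * (SS x t) ^ 1 * (CC x t) ^ 4 * (CH x) ^ 3 + 1536 * (Real.sqrt 6) ^ 1 * (Real.sqrt 3) ^ 3 * (SS x t) ^ 3 * (CC x t) ^ 2 * (CH x) ^ 3) * h6 + (4608 * (Real.sqrt 6) ^ 1 * (CC x t) ^ 3 * (SH x) ^ 1 * (CH x) ^ 4 + (-18432) * (Real.sqrt 6) ^ 1 * (SS x t) ^ 2 * (CC x t) ^ 1 * (SH x) ^ 1 * (CH x) ^ 4 + 27648 * (Real.sqrt 6) ^ 1 * (SS x t) ^ 2 * (CC x t) ^ 1 * (SH x) ^ 3 * (CH x) ^ 2 + (-41472) * (Real.sqrt 6) ^ 1 * (SS x t) ^ 2 * (CC x t) ^ 3 * (SH x) ^ 1 * (CH x) ^ 2 + (-55296) * (Real.sqrt 6) ^ 1 * (SS x t) ^ 4 * (CC x t) ^ 1 * (SH x) ^ 1 * (CH x) ^ 2 + 3072 * (Real.sqrt 6) ^ 1 * (Real.sqrt 3) ^ 1 * (SS x t) ^ 1 * (CC x t) ^ 2 * (CH x) ^ 5 + (-4608) * (Real.sqrt 6) ^ 1 * (Real.sqrt 3)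 ^ 1 * (SS x t) ^ 1 * (CC x t) ^ 2 * (SH x) ^ 2 * (CH x) ^ 3 + 4608 * (Real.sqrt 6) ^ 1 * (Real.sqrt 3) ^ 1 * (SS x t) ^ 1 * (CC x t) ^ 4 * (CH x) ^ 3 + 9216 * (Real.sqrt 6) ^ 1 * (Real.sqrt 3) ^ 1 * (SS x t) ^ 3 * (CC x t) ^ 2 * (CH x) ^ 3) * h3 + ((-768) * (Real.sqrt 6) ^ 1 * (CC x t) ^ 1 * (SH x) ^ 1 * (CH x) ^ 2 * (DD x t) ^ 1 + (-768) * (Real.sqrt 6) ^ 1 * (CC x t) ^ 1 * (SH x) ^ 1 * (CH x) ^ 4 + 2304 * (Real.sqrt 6) ^ 1 * (SS x t) ^ 2 * (CC x t) ^ 1 * (SH x) ^ 1 * (DD x t) ^ 1 + 6912 * (Real.sqrt 6) ^ 1 * (SS x t) ^ 4 * (CC x t) ^ 1 * (SH x) ^ 1 + (-256) * (Real.sqrt 6) ^ 1 * (Real.sqrt 3) ^ 1 * (SS x t) ^ 1 * (CH x) ^ 3 * (DD x t) ^ 1 + (-256) * (Real.sqrt 6) ^ 1 * (Real.sqrt 3)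 ^ 1 * (SS x t) ^ 1 * (CH x) ^ 5 + (-1536) * (Real.sqrt 6) ^ 1 * (Real.sqrt 3) ^ 1 * (SS x t) ^ 1 * (CC x t) ^ 2 * (CH x) ^ 1 * (DD x t) ^ 1 + (-1536) * (Real.sqrt 6) ^ 1 * (Real.sqrt 3) ^ 1 * (SS x t) ^ 1 * (CC x t) ^ 2 * (CH x) ^ 3 + (-768) * (Real.sqrt 6) ^ 1 * (Real.sqrt 3) ^ 1 * (SS x t) ^ 3 * (CH x) ^ 1 * (DD x t) ^ 1 + (-1536) * (Real.sqrt 6) ^ 1 * (Real.sqrt 3) ^ 1 * (SS x t) ^ 3 * (CH x) ^ 3 + (-4608) * (Real.sqrt 6) ^ 1 * (Real.sqrt 3) ^ 1 * (SS x t) ^ 3 * (CC x t) ^ 2 * (CH x) ^ 1 + (-2304) * (Real.sqrt 6) ^ 1 * (Real.sqrt 3) ^ 1 * (SS x t) ^ 5 * (CH x) ^ 1) * hD0 + (6912 * (Real.sqrt 6) ^ 1 * (CC x t) ^ 1 * (SH x) ^ 1 * (CH x) ^ 4 + (-62208) * (Real.sqrt 6) ^ 1 * (SS x t) ^ 4 *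 (CC x t) ^ 1 * (SH x) ^ 1 + 6912 * (Real.sqrt 6) ^ 1 * (Real.sqrt 3) ^ 1 * (SS x t) ^ 1 * (CH x) ^ 3 + (-4608) * (Real.sqrt 6) ^ 1 * (Real.sqrt 3) ^ 1 * (SS x t) ^ 1 * (CH x) ^ 5 + 6912 * (Real.sqrt 6) ^ 1 * (Real.sqrt 3) ^ 1 * (SS x t) ^ 1 * (CC x t) ^ 2 * (CH x) ^ 3 + 20736 * (Real.sqrt 6) ^ 1 * (Real.sqrt 3) ^ 1 * (SS x t) ^ 3 * (CH x) ^ 1 + (-6912) * (Real.sqrt 6) ^ 1 * (Real.sqrt 3) ^ 1 * (SS x t) ^ 3 * (CH x) ^ 3 + 20736 * (Real.sqrt 6) ^ 1 * (Real.sqrt 3) ^ 1 * (SS x t) ^ 3 * (CC x t) ^ 2 * (CH x) ^ 1 + 20736 * (Real.sqrt 6) ^ 1 * (Real.sqrt 3) ^ 1 * (SS x t) ^ 5 * (CH x) ^ 1) * hSC + ((-6912) * (Real.sqrt 6) ^ 1 * (CC x t) ^ 1 * (SH x) ^ 1 * (CH x) ^ 4 + 62208 * (Real.sqrt 6) ^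 1 * (SS x t) ^ 4 * (CC x t) ^ 1 * (SH x) ^ 1 + (-6912) * (Real.sqrt 6) ^ 1 * (Real.sqrt 3) ^ 1 * (SS x t) ^ 1 * (CH x) ^ 3 + (-2304) * (Real.sqrt 6) ^ 1 * (Real.sqrt 3) ^ 1 * (SS x t) ^ 1 * (CH x) ^ 5 + 6912 * (Real.sqrt 6) ^ 1 * (Real.sqrt 3) ^ 1 * (SS x t) ^ 1 * (SH x) ^ 2 * (CH x) ^ 3 + (-20736) * (Real.sqrt 6) ^ 1 * (Real.sqrt 3) ^ 1 * (SS x t) ^ 3 * (CH x) ^ 1 + (-6912) * (Real.sqrt 6) ^ 1 * (Real.sqrt 3) ^ 1 * (SS x t) ^ 3 * (CH x) ^ 3 + 20736 * (Real.sqrt 6) ^ 1 * (Real.sqrt 3) ^ 1 * (SS x t) ^ 3 * (SH x) ^ 2 * (CH x) ^ 1) * hhyp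
  have h2 : DD x t ^ 2 ≠ 0 := pow_ne_zero _ hDne
  have h12 : (DD x t ^ 1) ^ 2 * DD x t ^ 2 ≠ 0 :=
    mul_ne_zero (pow_ne_zero _ (pow_ne_zero _ hDne)) h2
  have h4 : DD x t ^ 4 ≠ 0 := pow_ne_zero _ hDne
  have hsum : DD x t ^ 2 * ((DD x t ^ 1) ^ 2 * DD x t ^ 2) ≠ 0 := mul_ne_zero h2 h12
  unfold UT U0 U1 U3
  rw [div_pow, div_mul_div_comm, div_add_div _ _ h2 h12, div_add_div _ _ hsum h4,
    div_eq_zero_iff]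
  left
  linear_combination (DD x t ^ 6) * h0

def F0 : ℝ × ℝ → ℝ := fun p => U0 p.1 p.2
def F1 : ℝ × ℝ → ℝ := fun p => U1 p.1 p.2
def F2 : ℝ × ℝ → ℝ := fun p => U2 p.1 p.2
def F3 : ℝ × ℝ → ℝ := fun p => U3 p.1 p.2

lemma hbreatherU : breatherU = F0 := by
  funext p
  exact (hV p.1 p.2).deriv

lemma hpdxF0 : pdx F0 = F1 := by
  funext p
  exact (hU0x p.1 p.2).deriv

lemma hpdxF1 : pdx F1 = F2 := by
  funext p
  exact (hU1x p.1 p.2).deriv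

lemma hpdxF2 : pdx F2 = F3 := by
  funext p
  exact (hU2x p.1 p.2).deriv

lemma hsmooth : ContDiff ℝ (⊤ : ℕ∞) F0 := by
  have hth : ContDiff ℝ (⊤:WithTop ℕ∞) (fun p : ℝ × ℝ => 2 * p.1 - 64 * p.2 - Real.pi / 2) := by
    fun_prop
  have hph : ContDiff ℝ (⊤:WithTop ℕ∞) (fun p : ℝ × ℝ => 2 * Real.sqrt 3 * p.1) := by fun_prop
  have hS : ContDiff ℝ (⊤:WithTop ℕ∞) (fun p : ℝ × ℝ => SS p.1 p.2) := hth.sin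
  have hC : ContDiff ℝ (⊤:WithTop ℕ∞) (fun p : ℝ × ℝ => CC p.1 p.2) := hth.cos
  have hsh : ContDiff ℝ (⊤:WithTop ℕ∞) (fun p : ℝ × ℝ => SH p.1) := hph.sinh
  have hch : ContDiff ℝ (⊤:WithTop ℕ∞) (fun p : ℝ × ℝ => CH p.1) := hph.cosh
  unfold F0 U0
  apply ContDiff.div
  · exact ((contDiff_const.mul ((((hS.pow _).mul (hC.pow _)).mul (hsh.pow _)).mul (hch.pow _))).add
      (contDiff_const.mul ((((hS.pow _).mul (hC.pow _)).mul (hsh.pow _)).mul (hch.pow _)))).of_le le_top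
  · exact (((hch.pow 2).add (contDiff_const.mul (hS.pow 2))).pow 1).of_le le_top
  · intro p
    exact pow_ne_zero _ (DD_pos p.1 p.2).ne'

end

theorem breather_solves_mkdv :
    ContDiff ℝ (⊤ : ℕ∞) breatherU ∧
    (∀ p : ℝ × ℝ,
      pdt breatherU p + (breatherU p) ^ 2 * pdx breatherU p
        + pdx (pdx (pdx breatherU)) p = 0) := by
  constructor
  · rw [hbreatherU]; exact hsmooth
  · intro p
    rw [hbreatherU, hpdxF0, hpdxF1, hpdxF2]
    have ht : pdt F0 p = UT p.1 p.2 := (hU0t p.1 p.2).deriv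
    rw [ht]
    show UT p.1 p.2 + U0 p.1 p.2 ^ 2 * U1 p.1 p.2 + U3 p.1 p.2 = 0
    exact pde_identity p.1 p.2
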